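/- Let X be a standard normal random variable and define μ(t) := E[X | X ≥ t] for t ∈ ℝ. Then μ(t) = φ(t)/(1 − Φ(t)) = e^{−t²/2} / ∫_t^∞ e^{−s²/2} ds for every t ∈ ℝ, μ is differentiable, and |μ'(t)| ≤ 100 for all t ∈ ℝ. -/

import Mathlib

open MeasureTheory Real

noncomputable section

/-- The standard normal cumulative distribution function `Φ`. -/
def stdGaussianCDF (x : ℝ) : ℝ :=
  (Real.sqrt (2 * Real.pi))⁻¹ * ∫ t in Set.Iic x, Real.exp (-t ^ 2 / 2)

/-- The standard normal density `φ`. -/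
def stdGaussianPDF (x : ℝ) : ℝ :=
  (Real.sqrt (2 * Real.pi))⁻¹ * Real.exp (-x ^ 2 / 2)

/-- `μ(t) = E[X | X ≥ t] = (∫_t^∞ s φ(s) ds)/(1 - Φ(t))` for a standard normal `X`. -/
def truncMean (t : ℝ) : ℝ :=
  (∫ s in Set.Ici t, s * stdGaussianPDF s) / (1 - stdGaussianCDF t)

/-!
Write `N(t) = e^{-t²/2}` and `G(t) = ∫_t^∞ N`. Since `(-N)' = sN`, the numerator of `μ` is
`N(t)/√(2π)`, and `1 - Φ(t) = G(t)/√(2π)`, so `μ = N/G`. From `N' = -tN` and `G' = -N` we get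
`μ' = μ(μ - t)`. This is nonnegative because `μ ≥ t`, and at most `1` because
`G · (1 - μ(μ - t)) = ∫_t^∞ (s - μ)² N(s) ds`: `1 - μ'` is the variance of `X` given `X ≥ t`.
-/

open Set Filter Topology

def gaussTail (t : ℝ) : ℝ :=
  ∫ s in Ici t, exp (-s ^ 2 / 2)

lemma integrable_exp_neg_sq_div_two : Integrable fun s : ℝ => exp (-s ^ 2 / 2) := by
  simpa [neg_div, div_eq_inv_mul] using integrable_exp_neg_mul_sq (b := 1 / 2) (by norm_num)

lemma integrable_mul_exp_neg_sq_div_two :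
    Integrable fun s : ℝ => s * exp (-s ^ 2 / 2) := by
  simpa [neg_div, div_eq_inv_mul] using integrable_mul_exp_neg_mul_sq (b := 1 / 2) (by norm_num)

lemma integrable_sq_mul_exp_neg_sq_div_two :
    Integrable fun s : ℝ => s ^ 2 * exp (-s ^ 2 / 2) := by
  convert integrable_rpow_mul_exp_neg_mul_sq (b := 1 / 2) (s := 2) (by norm_num) (by norm_num)
    using 3 with s
  · norm_cast
  · ring_nf

lemma hasDerivAt_exp_neg_sq_div_two (x : ℝ) :
    HasDerivAt (fun s : ℝ => exp (-s ^ 2 / 2)) (-x * exp (-x ^ 2 / 2)) x := by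
  have h : HasDerivAt (fun s : ℝ => -s ^ 2 / 2) (-x) x :=
    (((hasDerivAt_pow 2 x).neg).div_const 2).congr_deriv (by ring)
  simpa [mul_comm] using h.exp

lemma tendsto_pow_mul_exp_neg_sq_div_two_atTop (n : ℕ) :
    Tendsto (fun s : ℝ => s ^ n * exp (-s ^ 2 / 2)) atTop (𝓝 0) := by
  refine ((tendsto_rpow_abs_mul_exp_neg_mul_sq_cocompact (a := 1 / 2) (by norm_num) n).mono_left
    atTop_le_cocompact).congr' ?_
  filter_upwards [eventually_ge_atTop 0] with s hs
  rw [abs_of_nonneg hs, rpow_natCast]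
  ring_nf

lemma integral_Ici_mul_exp_neg_sq_div_two (t : ℝ) :
    ∫ s in Ici t, s * exp (-s ^ 2 / 2) = exp (-t ^ 2 / 2) := by
  have hderiv : ∀ x ∈ Ici t, HasDerivAt (fun s : ℝ => -exp (-s ^ 2 / 2))
      (x * exp (-x ^ 2 / 2)) x := fun x _ =>
    (hasDerivAt_exp_neg_sq_div_two x).neg.congr_deriv (by ring)
  rw [integral_Ici_eq_integral_Ioi, integral_Ioi_of_hasDerivAt_of_tendsto' hderiv
    integrable_mul_exp_neg_sq_div_two.integrableOn
    (by simpa using (tendsto_pow_mul_exp_neg_sq_div_two_atTop 0).neg)]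
  ring

lemma integral_Ici_sq_mul_exp_neg_sq_div_two (t : ℝ) :
    ∫ s in Ici t, s ^ 2 * exp (-s ^ 2 / 2) = t * exp (-t ^ 2 / 2) + gaussTail t := by
  have hderiv : ∀ x ∈ Ici t, HasDerivAt (fun s : ℝ => -(s * exp (-s ^ 2 / 2)))
      (x ^ 2 * exp (-x ^ 2 / 2) - exp (-x ^ 2 / 2)) x := fun x _ =>
    ((hasDerivAt_id' x).mul (hasDerivAt_exp_neg_sq_div_two x)).neg.congr_deriv (by ring)
  have key := integral_Ioi_of_hasDerivAt_of_tendsto' hderiv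
    (integrable_sq_mul_exp_neg_sq_div_two.sub integrable_exp_neg_sq_div_two).integrableOn
    (by simpa using (tendsto_pow_mul_exp_neg_sq_div_two_atTop 1).neg)
  rw [integral_sub integrable_sq_mul_exp_neg_sq_div_two.integrableOn
    integrable_exp_neg_sq_div_two.integrableOn] at key
  rw [gaussTail, integral_Ici_eq_integral_Ioi, integral_Ici_eq_integral_Ioi]
  linarith

lemma gaussTail_pos (t : ℝ) : 0 < gaussTail t := by
  have : NeZero (volume (Ici t)) := ⟨by simp⟩
  exact integral_exp_pos integrable_exp_neg_sq_div_two.integrableOn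

lemma gaussTail_eq_sub_intervalIntegral (u : ℝ) :
    gaussTail u = gaussTail 0 - ∫ s in (0 : ℝ)..u, exp (-s ^ 2 / 2) := by
  simp only [gaussTail, integral_Ici_eq_integral_Ioi]
  rw [← intervalIntegral.integral_Ioi_sub_Ioi' integrable_exp_neg_sq_div_two.integrableOn
    integrable_exp_neg_sq_div_two.integrableOn]
  ring

lemma hasDerivAt_gaussTail (t : ℝ) : HasDerivAt gaussTail (-exp (-t ^ 2 / 2)) t := by
  have hcont : Continuous fun s : ℝ => exp (-s ^ 2 / 2) := by fun_prop
  rw [funext gaussTail_eq_sub_intervalIntegral]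
  exact ((hasDerivAt_const t (gaussTail 0)).sub
    (hcont.integral_hasStrictDerivAt 0 t).hasDerivAt).congr_deriv (zero_sub _)

lemma integral_exp_neg_sq_div_two : ∫ s : ℝ, exp (-s ^ 2 / 2) = √(2 * π) := by
  convert integral_gaussian (1 / 2) using 3 with s
  · ring_nf
  · ring_nf

lemma one_sub_stdGaussianCDF (t : ℝ) : 1 - stdGaussianCDF t = (√(2 * π))⁻¹ * gaussTail t := by
  have hsplit := intervalIntegral.integral_Iic_add_Ioi (b := t)
    integrable_exp_neg_sq_div_two.integrableOn integrable_exp_neg_sq_div_two.integrableOn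
  rw [integral_exp_neg_sq_div_two] at hsplit
  have hc : √(2 * π) ≠ 0 := by positivity
  rw [stdGaussianCDF, gaussTail, integral_Ici_eq_integral_Ioi, eq_sub_of_add_eq' hsplit, mul_sub,
    inv_mul_cancel₀ hc]

lemma integral_Ici_sub_sq_mul_exp_neg_sq_div_two (t c : ℝ) :
    ∫ s in Ici t, (s - c) ^ 2 * exp (-s ^ 2 / 2)
      = t * exp (-t ^ 2 / 2) + gaussTail t - 2 * c * exp (-t ^ 2 / 2) + c ^ 2 * gaussTail t := by
  have h2 := integrable_sq_mul_exp_neg_sq_div_two.integrableOn (s := Ici t)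
  have h1 := (integrable_mul_exp_neg_sq_div_two.const_mul (2 * c)).integrableOn (s := Ici t)
  have h0 := (integrable_exp_neg_sq_div_two.const_mul (c ^ 2)).integrableOn (s := Ici t)
  have hexpand : (fun s : ℝ => (s - c) ^ 2 * exp (-s ^ 2 / 2)) = fun s =>
      s ^ 2 * exp (-s ^ 2 / 2) - 2 * c * (s * exp (-s ^ 2 / 2)) + c ^ 2 * exp (-s ^ 2 / 2) := by
    ext s
    ring
  rw [hexpand, integral_add ?_ h0, integral_sub h2 h1, integral_const_mul, integral_const_mul,
    integral_Ici_sq_mul_exp_neg_sq_div_two, integral_Ici_mul_exp_neg_sq_div_two, gaussTail]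
  exact h2.sub h1

lemma truncMean_eq_exp_div_gaussTail (t : ℝ) : truncMean t = exp (-t ^ 2 / 2) / gaussTail t := by
  have hnum : ∫ s in Ici t, s * stdGaussianPDF s = (√(2 * π))⁻¹ * exp (-t ^ 2 / 2) := by
    simp_rw [stdGaussianPDF, mul_left_comm _ (√(2 * π))⁻¹]
    rw [integral_const_mul, integral_Ici_mul_exp_neg_sq_div_two]
  rw [truncMean, hnum, one_sub_stdGaussianCDF, mul_div_mul_left _ _ (by positivity)]

lemma truncMean_eq_stdGaussianPDF_div (t : ℝ) :
    truncMean t = stdGaussianPDF t / (1 - stdGaussianCDF t) := by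
  rw [truncMean_eq_exp_div_gaussTail, stdGaussianPDF, one_sub_stdGaussianCDF,
    mul_div_mul_left _ _ (by positivity)]

lemma truncMean_pos (t : ℝ) : 0 < truncMean t := by
  rw [truncMean_eq_exp_div_gaussTail]
  exact div_pos (exp_pos _) (gaussTail_pos t)

lemma le_truncMean (t : ℝ) : t ≤ truncMean t := by
  have hmono : ∫ s in Ici t, t * exp (-s ^ 2 / 2) ≤ ∫ s in Ici t, s * exp (-s ^ 2 / 2) :=
    setIntegral_mono_on (integrable_exp_neg_sq_div_two.const_mul t).integrableOn
      integrable_mul_exp_neg_sq_div_two.integrableOn measurableSet_Ici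
      fun s hs => mul_le_mul_of_nonneg_right hs (exp_pos _).le
  rw [integral_const_mul, integral_Ici_mul_exp_neg_sq_div_two] at hmono
  rw [truncMean_eq_exp_div_gaussTail, le_div_iff₀ (gaussTail_pos t)]
  exact hmono

lemma hasDerivAt_truncMean (t : ℝ) :
    HasDerivAt truncMean (truncMean t * (truncMean t - t)) t := by
  have hG := (gaussTail_pos t).ne'
  have h := (hasDerivAt_exp_neg_sq_div_two t).div (hasDerivAt_gaussTail t) hG
  have hfun : truncMean = (fun s : ℝ => exp (-s ^ 2 / 2)) / gaussTail :=
    funext truncMean_eq_exp_div_gaussTail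
  rw [← hfun] at h
  refine h.congr_deriv ?_
  rw [truncMean_eq_exp_div_gaussTail]
  field_simp
  ring

lemma truncMean_mul_sub_le_one (t : ℝ) : truncMean t * (truncMean t - t) ≤ 1 := by
  set μ := truncMean t
  have hG := gaussTail_pos t
  have hN : exp (-t ^ 2 / 2) = μ * gaussTail t := by
    rw [show μ = _ from truncMean_eq_exp_div_gaussTail t, div_mul_cancel₀ _ hG.ne']
  have hvar : 0 ≤ ∫ s in Ici t, (s - μ) ^ 2 * exp (-s ^ 2 / 2) :=
    setIntegral_nonneg measurableSet_Ici fun s _ => by positivity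
  have hscaled : 0 ≤ gaussTail t * (1 - μ * (μ - t)) := by
    rw [integral_Ici_sub_sq_mul_exp_neg_sq_div_two, hN] at hvar
    linarith
  linarith [(mul_nonneg_iff_of_pos_left hG).mp hscaled]

lemma abs_deriv_truncMean_le_one (t : ℝ) : |deriv truncMean t| ≤ 1 := by
  rw [(hasDerivAt_truncMean t).deriv, abs_le]
  exact ⟨by nlinarith [truncMean_pos t, le_truncMean t], truncMean_mul_sub_le_one t⟩

theorem truncMean_props :
    (∀ t : ℝ, truncMean t = stdGaussianPDF t / (1 - stdGaussianCDF t)) ∧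
    (∀ t : ℝ, truncMean t =
      Real.exp (-t ^ 2 / 2) / ∫ s in Set.Ici t, Real.exp (-s ^ 2 / 2)) ∧
    Differentiable ℝ truncMean ∧
    ∀ t : ℝ, |deriv truncMean t| ≤ 100 :=
  ⟨truncMean_eq_stdGaussianPDF_div, truncMean_eq_exp_div_gaussTail,
    fun t => (hasDerivAt_truncMean t).differentiableAt,
    fun t => (abs_deriv_truncMean_le_one t).trans (by norm_num)⟩
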